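/- arXiv:0705.4362 — 2 statements merged into one kernel-verified Lean document; each statement's English description precedes it below -/
import Mathlib

section
/- Let n ≥ 3, let z_1, …, z_{n−1} be complex numbers, and for 1 ≤ i ≤ n−1 let N_i ∈ ℂ^n be the vector with (N_i)_1 = (N_i)_{i+1} = 1 and (N_i)_j = −2/(n−2) for all j ∉ {1, i+1}. Then (Σ_{k=1}^{n−1} z_k·P_k)·(Σ_{i=1}^{n−1} N_i) = (Σ_{k=1}^{n−1} P_k)·(Σ_{i=1}^{n−1} z_i·N_i). -/
/-! The whole identity rests on the symmetry `N_i (σ_k j) = N_k (σ_i j)`, where `σ_k` is the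
transposition `(1, k+1)`: the support `{1, i+1}` of the entries `1` of `N_i` is carried by `σ_k`
to `{k+1, σ_k (i+1)}`, which is symmetric in `i` and `k`. Expanding both sides entrywise as double
sums over `k` and `i`, this symmetry turns one into the other after exchanging the summations. -/

open Matrix

/-- The n×n complex permutation matrix of the transposition (a b). -/
noncomputable def permP (n : ℕ) (a b : Fin n) : Matrix (Fin n) (Fin n) ℂ :=
  Matrix.of fun i j => if i = Equiv.swap a b j then 1 else 0

/-- P_k = P(1,k+1) for 1 ≤ k ≤ n-1: with 0-based indices, the transposition (0, k+1). -/
noncomputable def Pk (n : ℕ) [NeZero n] (k : Fin (n - 1)) : Matrix (Fin n) (Fin n) ℂ :=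
  permP n 0 ⟨k.1 + 1, by have := k.2; omega⟩

/-- N_i : entries 1 at positions 1 and i+1 (1-based), and -2/(n-2) elsewhere. -/
noncomputable def Nvec (n : ℕ) (i : Fin (n - 1)) : Fin n → ℂ :=
  fun j => if j.1 = 0 ∨ j.1 = i.1 + 1 then 1 else -2 / ((n : ℂ) - 2)

theorem Equiv.swap_apply_eq_or_eq_comm {α : Type*} [DecidableEq α] {a b c : α} (hab : a ≠ b)
    (hac : a ≠ c) (x : α) :
    (Equiv.swap a b x = a ∨ Equiv.swap a b x = c) ↔
      (Equiv.swap a c x = a ∨ Equiv.swap a c x = b) := by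
  simp only [Equiv.swap_apply_eq_iff, Equiv.swap_apply_left]
  by_cases hbc : b = c
  · subst hbc; rfl
  · rw [Equiv.swap_apply_of_ne_of_ne hac.symm (Ne.symm hbc),
      Equiv.swap_apply_of_ne_of_ne hab.symm hbc]
    exact or_comm

theorem permP_eq_permMatrix (n : ℕ) (a b : Fin n) :
    permP n a b = (Equiv.swap a b).permMatrix ℂ := by
  ext i j
  simp [permP, Equiv.swap_apply_eq_iff]

def succIdx {n : ℕ} (k : Fin (n - 1)) : Fin n :=
  ⟨k.1 + 1, by have := k.2; omega⟩

theorem Pk_mulVec (n : ℕ) [NeZero n] (k : Fin (n - 1)) (v : Fin n → ℂ) :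
    Pk n k *ᵥ v = v ∘ Equiv.swap 0 (succIdx k) := by
  rw [Pk, permP_eq_permMatrix, permMatrix_mulVec]
  rfl

theorem Nvec_apply (n : ℕ) [NeZero n] (i : Fin (n - 1)) (j : Fin n) :
    Nvec n i j = if j = 0 ∨ j = succIdx i then 1 else -2 / ((n : ℂ) - 2) := by
  simp only [Nvec, succIdx, Fin.ext_iff, Fin.val_zero]

theorem Nvec_swap_comm (n : ℕ) [NeZero n] (i k : Fin (n - 1)) (j : Fin n) :
    Nvec n i (Equiv.swap 0 (succIdx k) j) = Nvec n k (Equiv.swap 0 (succIdx i) j) := by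
  have succIdx_ne_zero : ∀ l : Fin (n - 1), (0 : Fin n) ≠ succIdx l := fun l h ↦ by
    simp [succIdx, Fin.ext_iff] at h
  simp only [Nvec_apply,
    Equiv.swap_apply_eq_or_eq_comm (succIdx_ne_zero k) (succIdx_ne_zero i)]

theorem weighted_Pk_Nvec_general (n : ℕ) [NeZero n] (z : Fin (n - 1) → ℂ) :
    (∑ k : Fin (n - 1), z k • Pk n k) *ᵥ (∑ i : Fin (n - 1), Nvec n i)
      = (∑ k : Fin (n - 1), Pk n k) *ᵥ (∑ i : Fin (n - 1), z i • Nvec n i) := by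
  ext j
  simp only [sum_mulVec, smul_mulVec, Pk_mulVec, Finset.sum_apply, Pi.smul_apply,
    Function.comp_apply, smul_eq_mul, Finset.mul_sum]
  calc ∑ k, ∑ i, z k * Nvec n i (Equiv.swap 0 (succIdx k) j)
      = ∑ k, ∑ i, z k * Nvec n k (Equiv.swap 0 (succIdx i) j) := by
        simp only [Nvec_swap_comm n _ _ j]
    _ = ∑ i, ∑ k, z k * Nvec n k (Equiv.swap 0 (succIdx i) j) := Finset.sum_comm

/-- (Σ_k z_k·P_k)·(Σ_i N_i) = (Σ_k P_k)·(Σ_i z_i·N_i). -/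
theorem weighted_Pk_Nvec (n : ℕ) [NeZero n] (hn : 3 ≤ n) (z : Fin (n - 1) → ℂ) :
    (∑ k : Fin (n - 1), z k • Pk n k) *ᵥ (∑ i : Fin (n - 1), Nvec n i)
      = (∑ k : Fin (n - 1), Pk n k) *ᵥ (∑ i : Fin (n - 1), z i • Nvec n i) :=
  weighted_Pk_Nvec_general n z
end

section
/- Let m₂ be an integer with m₂ ≠ 0 and m₂ ≠ 1, and let z₁ ≠ z₂ be complex numbers. Let P₁ and P₂ be the 3×3 permutation matrices of the transpositions (1 2) and (1 3) respectively, and define A(z) = P₁/(z−z₁) + m₂·P₂/(z−z₂). Then there is no matrix function W : ℂ ∖ {z₁, z₂} → M₃(ℂ) all of whose entries are given by rational functions of z, with det W not identically zero, satisfying W′(z) = A(z)·W(z) for all z ∈ ℂ ∖ {z₁, z₂} at which all entries of W are defined. -/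
/-!
Fix a column `w = (w₀, w₁, w₂)` of `W`. The residue `P₁ + m₂ P₂` of `A` at infinity has the
integer eigenvalue `1 + m₂` on `(1, 1, 1)`, so one passes to the differences `u = w₀ - w₁`,
`v = w₂ - w₁`. They satisfy `(z - z₁)(z - z₂) (u, v)' = L (u, v)` with `L` linear in `z` and
residue `Λ = !![-1, m₂; m₂ - 1, 1]` at infinity. A rational solution behaves like `c z^ν` at
infinity with `ν ∈ ℤ` and `Λ c = ν c`; as `Λ² = (m₂² - m₂ + 1) • 1` and `m₂² - m₂ + 1` lies
strictly between two consecutive squares, `c = 0`, hence `u = 0`. So the first two rows of `W`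
agree and `det W = 0`.
-/

open Matrix

open Polynomial Filter Topology

theorem Int.sq_ne_sq_sub_self_add_one {m : ℤ} (hm0 : m ≠ 0) (hm1 : m ≠ 1) (k : ℤ) :
    k ^ 2 ≠ m ^ 2 - m + 1 := by
  rw [← sq_abs k]
  intro h
  have hk := abs_nonneg k
  obtain hm | hm : m < 0 ∨ 2 ≤ m := by omega
  · obtain hkm | hkm : |k| ≤ -m ∨ 1 - m ≤ |k| := by omega
    all_goals nlinarith
  · obtain hkm | hkm : |k| ≤ m - 1 ∨ m ≤ |k| := by omega
    all_goals nlinarith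

theorem permP_eq_swap (n : ℕ) (a b : Fin n) : permP n a b = Matrix.swap ℂ a b := by
  ext i j
  simp [permP, Matrix.swap, Equiv.Perm.permMatrix, PEquiv.toMatrix_apply, Equiv.swap_apply_eq_iff]

namespace Polynomial

section CommRing

variable {R : Type*} [CommRing R]

theorem coeff_X_mul_derivative (p : R[X]) (k : ℕ) :
    (X * derivative p).coeff k = k * p.coeff k := by
  cases k with
  | zero => simp
  | succ k => rw [coeff_X_mul, coeff_derivative]; push_cast; ring

theorem natDegree_X_mul_derivative_le (p : R[X]) : (X * derivative p).natDegree ≤ p.natDegree :=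
  natDegree_le_iff_coeff_eq_zero.2 fun N hN => by
    rw [coeff_X_mul_derivative, coeff_eq_zero_of_natDegree_lt hN, mul_zero]

theorem X_mul_wronskian (a b : R[X]) :
    X * wronskian a b = a * (X * derivative b) - X * derivative a * b := by
  rw [wronskian]; ring

variable {a b : R[X]} {r M : ℕ}

theorem natDegree_X_mul_wronskian_le (ha : a.natDegree ≤ r) (hb : b.natDegree ≤ M) :
    (X * wronskian a b).natDegree ≤ r + M := by
  rw [X_mul_wronskian]
  refine (natDegree_sub_le _ _).trans (max_le ?_ ?_) <;> refine natDegree_mul_le.trans ?_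
  · have := natDegree_X_mul_derivative_le b; omega
  · have := natDegree_X_mul_derivative_le a; omega

/-- Multiplying by `X` turns `d/dX` into the Euler operator, which scales `X ^ k` by `k`. -/
theorem coeff_X_mul_wronskian (ha : a.natDegree ≤ r) (hb : b.natDegree ≤ M) :
    (X * wronskian a b).coeff (r + M) = ((M : R) - r) * (a.coeff r * b.coeff M) := by
  rw [X_mul_wronskian, coeff_sub,
    coeff_mul_add_eq_of_natDegree_le ha ((natDegree_X_mul_derivative_le b).trans hb),
    coeff_mul_add_eq_of_natDegree_le ((natDegree_X_mul_derivative_le a).trans ha) hb,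
    coeff_X_mul_derivative, coeff_X_mul_derivative]
  ring

end CommRing

variable {ι : Type*} [Fintype ι]

theorem eq_zero_of_coeff_sup_natDegree_eq_zero {R : Type*} [Semiring R] {F : ι → R[X]}
    (h : ∀ i, (F i).coeff (Finset.univ.sup fun i => (F i).natDegree) = 0) : F = 0 := by
  funext i
  set M := Finset.univ.sup fun i => (F i).natDegree
  have hle : ∀ k, (F k).natDegree ≤ M := fun k =>
    Finset.le_sup (f := fun i => (F i).natDegree) (Finset.mem_univ k)
  obtain ⟨j, -, hj⟩ := Finset.exists_max_image Finset.univ (fun i => (F i).natDegree)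
    ⟨i, Finset.mem_univ i⟩
  have hMj : M = (F j).natDegree :=
    le_antisymm (Finset.sup_le fun k _ => hj k (Finset.mem_univ k)) (hle j)
  have hFj : F j = 0 := leadingCoeff_eq_zero.1 (by rw [leadingCoeff, ← hMj]; exact h j)
  have hM : M = 0 := by rw [hMj, hFj, natDegree_zero]
  have hFi : (F i).natDegree ≤ 0 := hM ▸ hle i
  rw [eq_C_of_natDegree_le_zero hFi, ← hM, h i, map_zero, Pi.zero_apply]

/-- If `F / Q` solves `D y' = L y` with `D` monic quadratic and `deg L ≤ 1`, the exponent
`M - deg Q` of `F / Q` at infinity is an eigenvalue of the linear coefficient of `L`, with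
eigenvector the `X ^ M`-coefficients of `F`. -/
theorem natDegree_sub_smul_coeff_eq_mulVec {R : Type*} [CommRing R] [IsDomain R] {D Q : R[X]}
    {F : ι → R[X]} {L : ι → ι → R[X]} {M : ℕ} (hD : D.Monic) (hD₂ : D.natDegree = 2)
    (hL : ∀ i k, (L i k).natDegree ≤ 1) (hF : ∀ i, (F i).natDegree ≤ M) (hQ : Q ≠ 0)
    (h : ∀ i, D * wronskian Q (F i) = (∑ k, L i k * F k) * Q) :
    ((M : R) - Q.natDegree) • (fun i => (F i).coeff M) =
      (of fun i k => (L i k).coeff 1) *ᵥ fun k => (F k).coeff M := by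
  ext i
  set r := Q.natDegree
  have hLF : (X * ∑ k, L i k * F k).natDegree ≤ M + 2 := by
    refine natDegree_mul_le.trans ?_
    have := natDegree_sum_le_of_forall_le (s := Finset.univ) (fun k => L i k * F k)
      (n := M + 1) fun k _ => natDegree_mul_le.trans (by have := hL i k; have := hF k; omega)
    have := natDegree_X_le (R := R)
    omega
  apply mul_right_cancel₀ (leadingCoeff_ne_zero.2 hQ)
  calc ((M : R) - r) • (F i).coeff M * Q.coeff r
      = (D * (X * wronskian Q (F i))).coeff (2 + (r + M)) := by
        rw [coeff_mul_add_eq_of_natDegree_le hD₂.le (natDegree_X_mul_wronskian_le le_rfl (hF i)),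
          coeff_X_mul_wronskian le_rfl (hF i), ← hD₂, hD.coeff_natDegree, smul_eq_mul]
        ring
    _ = ((X * ∑ k, L i k * F k) * Q).coeff ((M + 2) + r) := by
        rw [mul_left_comm, h i, ← mul_assoc]
        ring_nf
    _ = _ := by
        rw [coeff_mul_add_eq_of_natDegree_le hLF le_rfl, coeff_X_mul, finsetSum_coeff]
        simp only [mulVec, dotProduct, of_apply]
        congr 1
        refine Finset.sum_congr rfl fun k _ => ?_
        rw [add_comm, coeff_mul_add_eq_of_natDegree_le (hL i k) (hF k)]

variable [DecidableEq ι]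

noncomputable def clearedNumer {R : Type*} [CommRing R] (p q : ι → R[X]) (i : ι) : R[X] :=
  p i * ∏ k ∈ Finset.univ.erase i, q k

theorem eval_clearedNumer_div_eval_prod {K : Type*} [Field K] {p q : ι → K[X]} {x : K}
    (hq : ∀ k, (q k).eval x ≠ 0) (i : ι) :
    (clearedNumer p q i).eval x / (∏ k, q k).eval x = (p i).eval x / (q i).eval x := by
  rw [clearedNumer, ← Finset.mul_prod_erase _ _ (Finset.mem_univ i), eval_mul, eval_mul,
    mul_div_mul_right]
  rw [eval_prod]
  exact Finset.prod_ne_zero_iff.2 fun k _ => hq k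

theorem mul_wronskian_eq_of_hasDerivAt {𝕜 : Type*} [NontriviallyNormedField 𝕜]
    {N Q D R : 𝕜[X]} {S : Set 𝕜} (hS : S.Finite) (hQ : ∀ z ∉ S, Q.eval z ≠ 0)
    (hD : ∀ z ∉ S, D.eval z ≠ 0)
    (h : ∀ z ∉ S, HasDerivAt (fun x => N.eval x / Q.eval x) (R.eval z / (D.eval z * Q.eval z)) z) :
    D * wronskian Q N = R * Q := by
  refine eq_of_infinite_eval_eq _ _ (hS.infinite_compl.mono fun z hz => ?_)
  have hQz := hQ z hz
  have hDz := hD z hz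
  have := ((N.hasDerivAt z).div (Q.hasDerivAt z) hQz).unique (h z hz)
  field_simp at this
  simp only [Set.mem_ofPred_eq, eval_mul, wronskian, eval_sub]
  linear_combination this

end Polynomial

theorem mul_wronskian_clearedNumer_of_rational_solution {n : ℕ} {a b c d : Fin n} {m z₁ z₂ : ℂ}
    {p q : Fin n → ℂ[X]} (hq : ∀ i, q i ≠ 0) {S : Set ℂ} (hS : S.Finite)
    (hode : ∀ z ∉ S, ∀ i, HasDerivAt (fun x => (p i).eval x / (q i).eval x)
      ((((1 / (z - z₁)) • permP n a b + (m / (z - z₂)) • permP n c d) *ᵥ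
        fun k => (p k).eval z / (q k).eval z) i) z)
    (i : Fin n) :
    (X - C z₁) * (X - C z₂) * wronskian (∏ k, q k) (clearedNumer p q i) =
      ((X - C z₂) * clearedNumer p q (Equiv.swap a b i) +
        C m * (X - C z₁) * clearedNumer p q (Equiv.swap c d i)) * ∏ k, q k := by
  set Q := ∏ k, q k
  set D := (X - C z₁) * (X - C z₂)
  have hDQ : D * Q ≠ 0 := mul_ne_zero (mul_ne_zero (X_sub_C_ne_zero _) (X_sub_C_ne_zero _))
    (Finset.prod_ne_zero_iff.2 fun k _ => hq k)
  have hq' : ∀ z, Q.eval z ≠ 0 → ∀ k, (q k).eval z ≠ 0 := fun z hz k => by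
    rw [eval_prod, Finset.prod_ne_zero_iff] at hz
    exact hz k (Finset.mem_univ k)
  have hgood : ∀ z ∉ S ∪ {z | (D * Q).eval z = 0}, z ∉ S ∧ D.eval z ≠ 0 ∧ Q.eval z ≠ 0 := by
    intro z hz
    simp only [Set.mem_union, Set.mem_ofPred_eq, eval_mul, mul_eq_zero, not_or] at hz
    exact hz
  refine mul_wronskian_eq_of_hasDerivAt (hS.union (finite_setOfPred_isRoot hDQ))
    (fun z hz => (hgood z hz).2.2) (fun z hz => (hgood z hz).2.1) fun z hz => ?_
  obtain ⟨hzS, hDz, hQz⟩ := hgood z hz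
  have hev : (fun x => (clearedNumer p q i).eval x / Q.eval x) =ᶠ[𝓝 z]
      fun x => (p i).eval x / (q i).eval x :=
    (Q.continuous.continuousAt.eventually_ne hQz).mono fun x hx =>
      eval_clearedNumer_div_eval_prod (hq' x hx) i
  refine ((hode z hzS i).congr_of_eventuallyEq hev).congr_deriv ?_
  simp only [add_mulVec, smul_mulVec, permP_eq_swap, swap_mulVec,
    Pi.add_apply, Pi.smul_apply, Function.comp_apply, smul_eq_mul,
    ← eval_clearedNumer_div_eval_prod (hq' z hQz)]
  simp only [D, eval_mul, eval_add, eval_sub, eval_X, eval_C, mul_ne_zero_iff, sub_ne_zero]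
    at hDz ⊢
  have hQz' : (∏ k, q k).eval z ≠ 0 := hQz
  field_simp [sub_ne_zero.2 hDz.1, sub_ne_zero.2 hDz.2, hQz']
  ring

theorem eq_zero_of_reduced_system {m : ℤ} (hm0 : m ≠ 0) (hm1 : m ≠ 1) {z₁ z₂ : ℂ}
    {N₁ N₂ Q : ℂ[X]} (hQ : Q ≠ 0)
    (h₁ : (X - C z₁) * (X - C z₂) * wronskian Q N₁ =
      (-(X - C z₂) * N₁ + C (m : ℂ) * (X - C z₁) * N₂) * Q)
    (h₂ : (X - C z₁) * (X - C z₂) * wronskian Q N₂ =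
      ((C (m : ℂ) * (X - C z₁) - (X - C z₂)) * N₁ + (X - C z₂) * N₂) * Q) :
    N₁ = 0 := by
  set F : Fin 2 → ℂ[X] := ![N₁, N₂]
  set M := Finset.univ.sup fun i => (F i).natDegree
  have key := natDegree_sub_smul_coeff_eq_mulVec (F := F) (M := M) (D := (X - C z₁) * (X - C z₂))
    (L := !![-(X - C z₂), C (m : ℂ) * (X - C z₁); C (m : ℂ) * (X - C z₁) - (X - C z₂), X - C z₂])
    ((monic_X_sub_C z₁).mul (monic_X_sub_C z₂)) (by compute_degree!)
    (by intro i k; fin_cases i <;> fin_cases k <;> simp <;> compute_degree)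
    (fun i => Finset.le_sup (f := fun i => (F i).natDegree) (Finset.mem_univ i)) hQ
    (Fin.forall_fin_two.2
      ⟨by simpa [F, Fin.sum_univ_two] using h₁, by simpa [F, Fin.sum_univ_two] using h₂⟩)
  set ν : ℂ := (M : ℂ) - Q.natDegree
  have e₁ : ν * N₁.coeff M = -N₁.coeff M + m * N₂.coeff M := by
    simpa [F, mulVec, dotProduct, Fin.sum_univ_two, coeff_X, coeff_C] using congrFun key 0
  have e₂ : ν * N₂.coeff M = (m - 1) * N₁.coeff M + N₂.coeff M := by
    simpa [F, mulVec, dotProduct, Fin.sum_univ_two, coeff_X, coeff_C] using congrFun key 1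
  have hν : ν ^ 2 - (m ^ 2 - m + 1) ≠ 0 := by
    have hνℤ : ν = ((M - Q.natDegree : ℤ) : ℂ) := by push_cast; rfl
    rw [sub_ne_zero, hνℤ]
    exact_mod_cast Int.sq_ne_sq_sub_self_add_one hm0 hm1 _
  have ha : N₁.coeff M = 0 :=
    (mul_eq_zero.1 (by linear_combination (ν - 1) * e₁ + m * e₂)).resolve_left hν
  have hb : N₂.coeff M = 0 :=
    (mul_eq_zero.1 (by linear_combination (m - 1) * e₁ + (ν + 1) * e₂)).resolve_left hν
  exact congrFun (eq_zero_of_coeff_sup_natDegree_eq_zero (F := F) (Fin.forall_fin_two.2 ⟨ha, hb⟩)) 0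

theorem rational_solution_apply_zero_eq_apply_one {m : ℤ} (hm0 : m ≠ 0) (hm1 : m ≠ 1) {z₁ z₂ : ℂ}
    {p q : Fin 3 → ℂ[X]} (hq : ∀ i, q i ≠ 0) {S : Set ℂ} (hS : S.Finite)
    (hode : ∀ z ∉ S, ∀ i, HasDerivAt (fun x => (p i).eval x / (q i).eval x)
      ((((1 / (z - z₁)) • permP 3 0 1 + ((m : ℂ) / (z - z₂)) • permP 3 0 2) *ᵥ
        fun k => (p k).eval z / (q k).eval z) i) z)
    {w : ℂ} (hw : ∀ i, (q i).eval w ≠ 0) :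
    (p 0).eval w / (q 0).eval w = (p 1).eval w / (q 1).eval w := by
  have hF := mul_wronskian_clearedNumer_of_rational_solution hq hS hode
  have e₀ := hF 0
  have e₁ := hF 1
  have e₂ := hF 2
  simp (disch := decide) only [Equiv.swap_apply_left, Equiv.swap_apply_right,
    Equiv.swap_apply_of_ne_of_ne] at e₀ e₁ e₂
  have hdiff : clearedNumer p q 0 - clearedNumer p q 1 = 0 := by
    refine eq_zero_of_reduced_system hm0 hm1 (z₁ := z₁) (z₂ := z₂)
      (N₂ := clearedNumer p q 2 - clearedNumer p q 1)
      (Q := ∏ k, q k) (Finset.prod_ne_zero_iff.2 fun k _ => hq k) ?_ ?_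
    · simp only [sub_eq_add_neg, wronskian_add_right, wronskian_neg_right]
      linear_combination e₀ - e₁
    · simp only [sub_eq_add_neg, wronskian_add_right, wronskian_neg_right]
      linear_combination e₂ - e₁
  rw [← eval_clearedNumer_div_eval_prod hw, ← eval_clearedNumer_div_eval_prod hw,
    eq_of_sub_eq_zero hdiff]

theorem no_rational_fundamental_solution_m1_one_general (m₂ : ℤ) (hm0 : m₂ ≠ 0) (hm1 : m₂ ≠ 1)
    (z₁ z₂ : ℂ) :
    ¬ ∃ (p q : Fin 3 → Fin 3 → Polynomial ℂ) (W : ℂ → Matrix (Fin 3) (Fin 3) ℂ),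
      (∀ i j, q i j ≠ 0) ∧
      (∀ z : ℂ, W z = Matrix.of fun i j => (p i j).eval z / (q i j).eval z) ∧
      (∃ w : ℂ, w ≠ z₁ ∧ w ≠ z₂ ∧ (∀ i j, (q i j).eval w ≠ 0) ∧ (W w).det ≠ 0) ∧
      (∀ z : ℂ, z ≠ z₁ → z ≠ z₂ → (∀ i j, (q i j).eval z ≠ 0) → ∀ i j,
        HasDerivAt (fun u => W u i j)
          ((((1 / (z - z₁)) • permP 3 0 1 + ((m₂ : ℂ) / (z - z₂)) • permP 3 0 2)
            * W z) i j) z) := by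
  rintro ⟨p, q, W, hq, hW, ⟨w, -, -, hwq, hdet⟩, hode⟩
  have hS : ({z₁, z₂} ∪ ⋃ i, ⋃ k, {z | (q i k).eval z = 0} : Set ℂ).Finite :=
    (Set.toFinite _).union <| Set.finite_iUnion fun i => Set.finite_iUnion fun k =>
      finite_setOfPred_isRoot (hq i k)
  have hrows : W w 0 = W w 1 := funext fun j => by
    simp only [hW, of_apply]
    refine rational_solution_apply_zero_eq_apply_one hm0 hm1 (z₁ := z₁) (z₂ := z₂)
      (p := fun i => p i j) (fun i => hq i j) hS (fun z hz i => ?_) (fun i => hwq i j)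
    simp only [Set.mem_union, Set.mem_insert_iff, Set.mem_singleton_iff, Set.mem_iUnion,
      Set.mem_ofPred_eq, not_or, not_exists] at hz
    have := hode z hz.1.1 hz.1.2 hz.2 i j
    simp_rw [hW] at this
    exact this
  exact hdet (det_zero_of_row_eq (by decide) hrows)

/-- For m₂ ∈ ℤ, m₂ ≠ 0, 1, the system W' = A(z)·W with
A(z) = P₁/(z-z₁) + m₂·P₂/(z-z₂) (P₁, P₂ the permutation matrices of (1 2) and (1 3))
has no fundamental solution all of whose entries are rational functions of z. -/
theorem no_rational_fundamental_solution_m1_one (m₂ : ℤ) (hm0 : m₂ ≠ 0) (hm1 : m₂ ≠ 1)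
    (z₁ z₂ : ℂ) (hz : z₁ ≠ z₂) :
    ¬ ∃ (p q : Fin 3 → Fin 3 → Polynomial ℂ) (W : ℂ → Matrix (Fin 3) (Fin 3) ℂ),
      (∀ i j, q i j ≠ 0) ∧
      (∀ z : ℂ, W z = Matrix.of fun i j => (p i j).eval z / (q i j).eval z) ∧
      (∃ w : ℂ, w ≠ z₁ ∧ w ≠ z₂ ∧ (∀ i j, (q i j).eval w ≠ 0) ∧ (W w).det ≠ 0) ∧
      (∀ z : ℂ, z ≠ z₁ → z ≠ z₂ → (∀ i j, (q i j).eval z ≠ 0) → ∀ i j,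
        HasDerivAt (fun u => W u i j)
          ((((1 / (z - z₁)) • permP 3 0 1 + ((m₂ : ℂ) / (z - z₂)) • permP 3 0 2)
            * W z) i j) z) :=
  no_rational_fundamental_solution_m1_one_general m₂ hm0 hm1 z₁ z₂
end
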